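/- Let K be a field of characteristic zero, X a finite connected poset, and φ ∈ Δ(I(X,K)). Then for all x < y in X: φ(e_{xy}) = (φ(e_x)(x,x) − φ(e_x)(y,y)) e_{xy} = (φ(e_y)(y,y) − φ(e_y)(x,x)) e_{xy}; in particular φ(e_{xy}) is a scalar multiple of e_{xy}. -/

import Mathlib

open scoped Classical

attribute [local instance 100] LieRing.ofAssociativeRing

noncomputable section

/-- A `1/2`-derivation of a Lie algebra `L` over `K`:
`φ ⁅a, b⁆ = (1/2) • (⁅φ a, b⁆ + ⁅a, φ b⁆)`. -/
def IsHalfDerivation (K L : Type*) [Field K] [LieRing L] [LieAlgebra K L]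
    (φ : L →ₗ[K] L) : Prop :=
  ∀ a b : L, φ ⁅a, b⁆ = (2⁻¹ : K) • (⁅φ a, b⁆ + ⁅a, φ b⁆)

/-- The standard basis element `e_{xy}` (for `x ≤ y`) of the incidence algebra. -/
def eI (K : Type*) {X : Type*} [Field K] [PartialOrder X] [DecidableEq X]
    (x y : X) (h : x ≤ y) : IncidenceAlgebra K X :=
  ⟨fun u v => if x = u ∧ y = v then (1 : K) else 0, by
    intro u v huv
    show (if x = u ∧ y = v then (1 : K) else 0) = 0
    rw [if_neg]; rintro ⟨rfl, rfl⟩; exact huv h⟩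

/-- A walk `u 0, u 1, …, u m` in a poset: consecutive vertices are comparable and
cover one another (`l(x,y) = 1`). -/
def IsWalkOn {X : Type*} [PartialOrder X] (u : ℕ → X) (m : ℕ) : Prop :=
  ∀ i < m, u i ⋖ u (i + 1) ∨ u (i + 1) ⋖ u i

/-- A poset is connected if any two of its elements are joined by a walk. -/
def ConnectedPoset (X : Type*) [PartialOrder X] : Prop :=
  ∀ x y : X, ∃ (u : ℕ → X) (m : ℕ), IsWalkOn u m ∧ u 0 = x ∧ u m = y

/-!
Apply the `1/2`-derivation identity to the three relations `⁅e_x, e_xy⁆ = e_xy`,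
`⁅e_xy, e_y⁆ = e_xy` and `⁅e_x, e_y⁆ = 0`, and compare coefficients. The third relation kills the
entries `φ(e_x)(y,v)` for `v ≠ y` and `φ(e_y)(u,x)` for `u ≠ x`; the first two then force
`φ(e_xy)` to vanish away from `(x,y)`, and at `(x,y)` they read
`2 φ(e_xy)(x,y) = φ(e_x)(x,x) - φ(e_x)(y,y) + φ(e_xy)(x,y)` and its mirror image.
-/

theorem IsHalfDerivation.two_smul_map_lie {K L : Type*} [Field K] [NeZero (2 : K)] [LieRing L]
    [LieAlgebra K L] {φ : L →ₗ[K] L} (hφ : IsHalfDerivation K L φ) (a b : L) :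
    (2 : K) • φ ⁅a, b⁆ = ⁅φ a, b⁆ + ⁅a, φ b⁆ := by
  rw [hφ, smul_inv_smul₀ two_ne_zero]

theorem eI_apply {K X : Type*} [Field K] [PartialOrder X] [DecidableEq X]
    (x y : X) (h : x ≤ y) (u v : X) :
    eI K x y h u v = if x = u ∧ y = v then 1 else 0 := rfl

section IncidenceAlgebra

variable {K X : Type*} [Field K] [PartialOrder X] [LocallyFiniteOrder X] [DecidableEq X]

theorem mul_eI_apply (f : IncidenceAlgebra K X) {x y : X} (h : x ≤ y) (u v : X) :
    (f * eI K x y h) u v = if y = v then f u x else 0 := by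
  rw [IncidenceAlgebra.mul_apply, Finset.sum_eq_single x]
  · by_cases hv : y = v <;> simp [eI_apply, hv]
  · intro t _ htx
    simp [eI_apply, Ne.symm htx]
  · rw [Finset.mem_Icc, not_and_or]
    rintro (hux | hxv)
    · simp [IncidenceAlgebra.apply_eq_zero_of_not_le hux]
    · simp only [eI_apply, true_and, mul_ite, mul_one, mul_zero, ite_eq_right_iff]
      rintro rfl
      exact absurd h hxv

theorem eI_mul_apply (f : IncidenceAlgebra K X) {x y : X} (h : x ≤ y) (u v : X) :
    (eI K x y h * f) u v = if x = u then f y v else 0 := by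
  rw [IncidenceAlgebra.mul_apply, Finset.sum_eq_single y]
  · by_cases hu : x = u <;> simp [eI_apply, hu]
  · intro t _ hty
    simp [eI_apply, Ne.symm hty]
  · rw [Finset.mem_Icc, not_and_or]
    rintro (huy | hyv)
    · simp only [eI_apply, and_true, ite_mul, one_mul, zero_mul, ite_eq_right_iff]
      rintro rfl
      exact absurd h huy
    · simp [IncidenceAlgebra.apply_eq_zero_of_not_le hyv]

theorem lie_eI_apply (f : IncidenceAlgebra K X) {x y : X} (h : x ≤ y) (u v : X) :
    ⁅f, eI K x y h⁆ u v = (if y = v then f u x else 0) - if x = u then f y v else 0 := by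
  rw [Ring.lie_def, IncidenceAlgebra.sub_apply, mul_eI_apply, eI_mul_apply]

theorem eI_lie_apply (f : IncidenceAlgebra K X) {x y : X} (h : x ≤ y) (u v : X) :
    ⁅eI K x y h, f⁆ u v = (if x = u then f y v else 0) - if y = v then f u x else 0 := by
  rw [Ring.lie_def, IncidenceAlgebra.sub_apply, mul_eI_apply, eI_mul_apply]

theorem lie_eI_self_eI {x y : X} (hxy : x < y) :
    ⁅eI K x x le_rfl, eI K x y hxy.le⁆ = eI K x y hxy.le := by
  ext u v _
  rw [eI_lie_apply]
  simp only [eI_apply]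
  grind

theorem lie_eI_eI_self {x y : X} (hxy : x < y) :
    ⁅eI K x y hxy.le, eI K y y le_rfl⁆ = eI K x y hxy.le := by
  ext u v _
  rw [eI_lie_apply]
  simp only [eI_apply]
  grind

theorem lie_eI_self_eI_self_of_ne {x y : X} (hxy : x ≠ y) :
    ⁅eI K x x le_rfl, eI K y y le_rfl⁆ = 0 := by
  ext u v _
  rw [eI_lie_apply, IncidenceAlgebra.zero_apply]
  simp only [eI_apply]
  grind

namespace IsHalfDerivation

variable [CharZero K] {φ : IncidenceAlgebra K X →ₗ[K] IncidenceAlgebra K X}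
  (hφ : IsHalfDerivation K (IncidenceAlgebra K X) φ)
include hφ

theorem two_mul_map_lie_apply (a b : IncidenceAlgebra K X) (u v : X) :
    2 * φ ⁅a, b⁆ u v = ⁅φ a, b⁆ u v + ⁅a, φ b⁆ u v :=
  congr($(hφ.two_smul_map_lie a b) u v)

variable {x y : X} (hxy : x < y)
include hxy

theorem map_eI_self_apply_of_ne_right {v : X} (hv : v ≠ y) : φ (eI K x x le_rfl) y v = 0 := by
  have h := hφ.two_mul_map_lie_apply (eI K x x le_rfl) (eI K y y le_rfl) y v
  rw [lie_eI_self_eI_self_of_ne hxy.ne, map_zero, lie_eI_apply, eI_lie_apply,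
    IncidenceAlgebra.apply_eq_zero_of_not_le hxy.not_ge (φ _)] at h
  simpa [hv.symm, hxy.ne] using h

theorem map_eI_self_apply_of_ne_left {u : X} (hu : u ≠ x) : φ (eI K y y le_rfl) u x = 0 := by
  have h := hφ.two_mul_map_lie_apply (eI K x x le_rfl) (eI K y y le_rfl) u x
  rw [lie_eI_self_eI_self_of_ne hxy.ne, map_zero, lie_eI_apply, eI_lie_apply,
    IncidenceAlgebra.apply_eq_zero_of_not_le hxy.not_ge (φ _)] at h
  simpa [hu.symm, hxy.ne'] using h

theorem map_eI_apply_of_ne {u v : X} (huv : ¬(u = x ∧ v = y)) :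
    φ (eI K x y hxy.le) u v = 0 := by
  have h₁ := hφ.two_mul_map_lie_apply (eI K x x le_rfl) (eI K x y hxy.le) u v
  rw [lie_eI_self_eI hxy, lie_eI_apply, eI_lie_apply] at h₁
  have h₂ := hφ.two_mul_map_lie_apply (eI K x y hxy.le) (eI K y y le_rfl) u v
  rw [lie_eI_eI_self hxy, lie_eI_apply, eI_lie_apply] at h₂
  by_cases hu : u = x
  · subst u
    have hv : v ≠ y := fun hv => huv ⟨rfl, hv⟩
    rw [hφ.map_eI_self_apply_of_ne_right hxy hv] at h₁
    by_cases hvx : v = x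
    · subst v
      simpa [hxy.ne'] using h₁
    · simp only [Ne.symm hv, Ne.symm hvx, ↓reduceIte] at h₁
      linear_combination h₁
  · by_cases hv : v = y
    · subst v
      rw [hφ.map_eI_self_apply_of_ne_left hxy hu] at h₂
      by_cases huy : u = y
      · subst u
        simpa [hxy.ne] using h₂
      · simp only [Ne.symm huy, Ne.symm hu, ↓reduceIte] at h₂
        linear_combination h₂
    · by_cases hvx : v = x
      · subst v
        have h3 : (3 : K) * φ (eI K x y hxy.le) u x = 0 := by
          simp only [Ne.symm hu, hxy.ne', ↓reduceIte] at h₁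
          linear_combination h₁
        simpa using h3
      · simpa [Ne.symm hu, Ne.symm hv, Ne.symm hvx] using h₁

theorem map_eI_apply_eq_left :
    φ (eI K x y hxy.le) x y = φ (eI K x x le_rfl) x x - φ (eI K x x le_rfl) y y := by
  have h := hφ.two_mul_map_lie_apply (eI K x x le_rfl) (eI K x y hxy.le) x y
  rw [lie_eI_self_eI hxy, lie_eI_apply, eI_lie_apply] at h
  simp only [hxy.ne, ↓reduceIte] at h
  linear_combination h

theorem map_eI_apply_eq_right :
    φ (eI K x y hxy.le) x y = φ (eI K y y le_rfl) y y - φ (eI K y y le_rfl) x x := by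
  have h := hφ.two_mul_map_lie_apply (eI K x y hxy.le) (eI K y y le_rfl) x y
  rw [lie_eI_eI_self hxy, lie_eI_apply, eI_lie_apply] at h
  simp only [hxy.ne', ↓reduceIte] at h
  linear_combination h

theorem map_eI_eq_smul : φ (eI K x y hxy.le) = φ (eI K x y hxy.le) x y • eI K x y hxy.le := by
  ext u v _
  rw [IncidenceAlgebra.constSMul_apply, eI_apply, smul_eq_mul]
  by_cases huv : u = x ∧ v = y
  · obtain ⟨rfl, rfl⟩ := huv
    simp
  · rw [hφ.map_eI_apply_of_ne hxy huv, if_neg (fun h => huv ⟨h.1.symm, h.2.symm⟩), mul_zero]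

end IsHalfDerivation

end IncidenceAlgebra

theorem statement7_general (K X : Type*) [Field K] [CharZero K] [PartialOrder X]
    [LocallyFiniteOrder X] [DecidableEq X]
    (φ : IncidenceAlgebra K X →ₗ[K] IncidenceAlgebra K X)
    (hφ : IsHalfDerivation K (IncidenceAlgebra K X) φ)
    (x y : X) (hxy : x < y) :
    φ (eI K x y hxy.le) =
      (φ (eI K x x le_rfl) x x - φ (eI K x x le_rfl) y y) • eI K x y hxy.le ∧
    φ (eI K x y hxy.le) =
      (φ (eI K y y le_rfl) y y - φ (eI K y y le_rfl) x x) • eI K x y hxy.le ∧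
    ∃ k : K, φ (eI K x y hxy.le) = k • eI K x y hxy.le := by
  have h := hφ.map_eI_eq_smul hxy
  refine ⟨?_, ?_, ⟨_, h⟩⟩
  · rw [h, hφ.map_eI_apply_eq_left hxy]
  · rw [h, hφ.map_eI_apply_eq_right hxy]

/-- for a `1/2`-derivation `φ` of `I(X,K)` over a finite connected poset
and `x < y`, `φ e_{xy} = (φ(e_x)(x,x) − φ(e_x)(y,y)) e_{xy}
= (φ(e_y)(y,y) − φ(e_y)(x,x)) e_{xy}`; in particular `φ e_{xy}` is a scalar multiple
of `e_{xy}`. -/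
theorem statement7 (K X : Type*) [Field K] [CharZero K] [PartialOrder X] [Fintype X]
    [LocallyFiniteOrder X] [DecidableEq X] (hconn : ConnectedPoset X)
    (φ : IncidenceAlgebra K X →ₗ[K] IncidenceAlgebra K X)
    (hφ : IsHalfDerivation K (IncidenceAlgebra K X) φ)
    (x y : X) (hxy : x < y) :
    φ (eI K x y hxy.le) =
      (φ (eI K x x le_rfl) x x - φ (eI K x x le_rfl) y y) • eI K x y hxy.le ∧
    φ (eI K x y hxy.le) =
      (φ (eI K y y le_rfl) y y - φ (eI K y y le_rfl) x x) • eI K x y hxy.le ∧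
    ∃ k : K, φ (eI K x y hxy.le) = k • eI K x y hxy.le :=
  statement7_general K X φ hφ x y hxy
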